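/- Let n = 2N with N ≥ 2, h = 1/n, and let z₁, z₂ ∈ ℂ. Set Ã^h = L^h − z₁ I and Ã^{2h} = L^{2h} − z₂ I, assume Ã^{2h} is invertible, and define TG = I − P (Ã^{2h})⁻¹ R Ã^h. Then for every l with 1 ≤ l ≤ N−1, writing λ_{n−l}^h = 4n² cos²(lπ/(2n)) − z₁ and λ_l^{2h} = n² sin²(lπ/n) − z₂, the action on the oscillatory mode is TG w_{n−l}^h = w_{n−l}^h + s_l (λ_{n−l}^h / λ_l^{2h}) (c_l w_l^h − s_l w_{n−l}^h), where c_l = cos²(lπ/(2n)) and s_l = sin²(lπ/(2n)). -/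

import Mathlib

open Real Matrix Complex

/-- The one-dimensional discrete Dirichlet Laplacian on `m` intervals with grid
spacing `δ`, as a complex `(m-1)×(m-1)` matrix: diagonal entries `2/δ²`,
first sub- and superdiagonal entries `-1/δ²`, all other entries zero. -/
noncomputable def dLapC (m : ℕ) (δ : ℝ) : Matrix (Fin (m - 1)) (Fin (m - 1)) ℂ :=
  Matrix.of fun i j =>
    if (i : ℕ) = (j : ℕ) then 2 / (δ : ℂ) ^ 2
    else if (i : ℕ) + 1 = (j : ℕ) ∨ (j : ℕ) + 1 = (i : ℕ) then -(1 / (δ : ℂ) ^ 2)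
    else 0

/-- Fine-grid Fourier mode `w_l^h ∈ ℂ^{n-1}`, `n = 2N`: components `sin (l j π / (2N))`. -/
noncomputable def fineModeC (N l : ℕ) : Fin (2 * N - 1) → ℂ :=
  fun j => (Real.sin (l * ((j : ℕ) + 1) * Real.pi / (2 * N)) : ℂ)

/-- Full-weighting restriction `R`, the `(N-1)×(2N-1)` matrix with
`R_{i,2i-1} = R_{i,2i+1} = 1/4`, `R_{i,2i} = 1/2`. -/
noncomputable def fullWeightingC (N : ℕ) : Matrix (Fin (N - 1)) (Fin (2 * N - 1)) ℂ :=
  Matrix.of fun i j =>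
    if (j : ℕ) + 1 = 2 * ((i : ℕ) + 1) then 1 / 2
    else if (j : ℕ) + 2 = 2 * ((i : ℕ) + 1) ∨ (j : ℕ) = 2 * ((i : ℕ) + 1) then 1 / 4
    else 0

/-- Linear interpolation `P`, the `(2N-1)×(N-1)` matrix with `P_{2i,i} = 1`,
`P_{2i-1,i} = P_{2i+1,i} = 1/2`. -/
noncomputable def linInterpC (N : ℕ) : Matrix (Fin (2 * N - 1)) (Fin (N - 1)) ℂ :=
  Matrix.of fun j i =>
    if (j : ℕ) + 1 = 2 * ((i : ℕ) + 1) then 1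
    else if (j : ℕ) + 2 = 2 * ((i : ℕ) + 1) ∨ (j : ℕ) = 2 * ((i : ℕ) + 1) then 1 / 2
    else 0

/-!
Sine modes `k ↦ sin (k θ)` that vanish at both ends of the grid are eigenvectors of the
discrete Dirichlet Laplacian with eigenvalue `4 sin² (θ / 2) / δ²`. Full weighting sends the
fine mode `w_θ` to `cos² (θ / 2)` times the coarse mode of frequency `2 θ`, and linear
interpolation sends that coarse mode back to `cos² (θ / 2) w_θ - sin² (θ / 2) w_{π - θ}`, the
combination of the two fine modes aliasing to it. Hence `TG` acts on the oscillatory mode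
`w_{π - θ}` through scalars only, the coarse inverse contributing the reciprocal of the coarse
eigenvalue.
-/

open Finset

-- For `μ = 0` invertibility forces `u = 0`, so the junk value `0⁻¹ = 0` does no harm.
theorem Matrix.inv_mulVec_of_mulVec_eq_smul {K n : Type*} [Field K] [Fintype n]
    [DecidableEq n] {A : Matrix n n K} (hA : IsUnit A.det) {u : n → K} {μ : K}
    (h : A *ᵥ u = μ • u) :
    A⁻¹ *ᵥ u = μ⁻¹ • u := by
  have hu : u = μ • (A⁻¹ *ᵥ u) := by
    rw [← mulVec_smul, ← h, mulVec_mulVec, nonsing_inv_mul _ hA, one_mulVec]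
  rcases eq_or_ne μ 0 with rfl | hμ
  · rw [hu, zero_smul, mulVec_zero, smul_zero]
  · conv_rhs => rw [hu]
    rw [smul_smul, inv_mul_cancel₀ hμ, one_smul]

theorem Matrix.sub_smul_one_mulVec_of_mulVec_eq_smul {K n : Type*} [CommRing K] [Fintype n]
    [DecidableEq n] {A : Matrix n n K} {u : n → K} {μ : K} (h : A *ᵥ u = μ • u) (z : K) :
    (A - z • 1) *ᵥ u = (μ - z) • u := by
  rw [sub_mulVec, smul_mulVec, one_mulVec, h, sub_smul]

theorem twoGrid_mulVec_eq {K m c : Type*} [Field K] [Fintype m] [Fintype c] [DecidableEq m]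
    [DecidableEq c] {A₁ : Matrix m m K} {A₂ : Matrix c c K} {R : Matrix c m K}
    {P : Matrix m c K} {w : m → K} {u : c → K} {v : m → K} {μ₁ μ₂ ρ : K}
    (hA₂ : IsUnit A₂.det) (h₁ : A₁ *ᵥ w = μ₁ • w) (hR : R *ᵥ w = ρ • u)
    (h₂ : A₂ *ᵥ u = μ₂ • u) (hP : P *ᵥ u = v) :
    (1 - P * A₂⁻¹ * R * A₁) *ᵥ w = w - (μ₁ * ρ / μ₂) • v := by
  simp only [sub_mulVec, one_mulVec, ← mulVec_mulVec, h₁, hR, mulVec_smul,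
    inv_mulVec_of_mulVec_eq_smul hA₂ h₂, hP, smul_smul, div_eq_mul_inv, mul_assoc]

theorem Fin.sum_ite_val_add_one_eq (d k : ℕ) (W : ℕ → ℂ) :
    ∑ j : Fin d, (if (j : ℕ) + 1 = k then W ((j : ℕ) + 1) else 0)
      = if 1 ≤ k ∧ k ≤ d then W k else 0 := by
  rw [Fin.sum_univ_eq_sum_range (fun j => if j + 1 = k then W (j + 1) else 0)]
  cases k with
  | zero =>
    simp only [Nat.add_one_ne_zero, if_false, sum_const_zero]
    rw [if_neg (by omega)]
  | succ c =>
    simp only [Nat.add_right_cancel_iff, sum_ite_eq', mem_range]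
    split_ifs <;> first | rfl | omega

theorem Fin.sum_ite_val_add_one_eq_of_eq_zero {d k : ℕ} {W : ℕ → ℂ} (h₀ : W 0 = 0)
    (hd : W (d + 1) = 0) (hk : k ≤ d + 1) :
    ∑ j : Fin d, (if (j : ℕ) + 1 = k then W ((j : ℕ) + 1) else 0) = W k := by
  rw [Fin.sum_ite_val_add_one_eq]
  split_ifs with h
  · rfl
  · rcases (by omega : k = 0 ∨ k = d + 1) with rfl | rfl <;> simp [*]

theorem dLapC_mulVec_apply {m : ℕ} (δ : ℝ) {W : ℕ → ℂ} (h₀ : W 0 = 0) (hm : W m = 0)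
    (i : Fin (m - 1)) :
    (dLapC m δ *ᵥ fun j => W ((j : ℕ) + 1)) i
      = (2 * W ((i : ℕ) + 1) - W i - W ((i : ℕ) + 2)) / (δ : ℂ) ^ 2 := by
  have hi := i.isLt
  have hentry : ∀ j : Fin (m - 1), dLapC m δ i j * W ((j : ℕ) + 1)
      = 2 / (δ : ℂ) ^ 2 * (if (j : ℕ) + 1 = i + 1 then W ((j : ℕ) + 1) else 0)
        - 1 / (δ : ℂ) ^ 2 * (if (j : ℕ) + 1 = i then W ((j : ℕ) + 1) else 0)
        - 1 / (δ : ℂ) ^ 2 * (if (j : ℕ) + 1 = i + 2 then W ((j : ℕ) + 1) else 0) := by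
    intro j
    simp only [dLapC, of_apply]
    split_ifs <;> first | omega | ring
  have hd : W (m - 1 + 1) = 0 := by rwa [Nat.sub_add_cancel (by omega)]
  simp only [mulVec, dotProduct, hentry, sum_sub_distrib, ← mul_sum,
    Fin.sum_ite_val_add_one_eq_of_eq_zero h₀ hd (by omega : (i : ℕ) + 1 ≤ m - 1 + 1),
    Fin.sum_ite_val_add_one_eq_of_eq_zero h₀ hd (by omega : (i : ℕ) ≤ m - 1 + 1),
    Fin.sum_ite_val_add_one_eq_of_eq_zero h₀ hd (by omega : (i : ℕ) + 2 ≤ m - 1 + 1)]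
  ring

theorem fullWeightingC_mulVec_apply (N : ℕ) (W : ℕ → ℂ) (i : Fin (N - 1)) :
    (fullWeightingC N *ᵥ fun j => W ((j : ℕ) + 1)) i
      = (W (2 * i + 1) + 2 * W (2 * i + 2) + W (2 * i + 3)) / 4 := by
  have hentry : ∀ j : Fin (2 * N - 1), fullWeightingC N i j * W ((j : ℕ) + 1)
      = 1 / 4 * (if (j : ℕ) + 1 = 2 * i + 1 then W ((j : ℕ) + 1) else 0)
        + 1 / 2 * (if (j : ℕ) + 1 = 2 * i + 2 then W ((j : ℕ) + 1) else 0)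
        + 1 / 4 * (if (j : ℕ) + 1 = 2 * i + 3 then W ((j : ℕ) + 1) else 0) := by
    intro j
    simp only [fullWeightingC, of_apply]
    split_ifs <;> first | omega | ring
  have hi := i.isLt
  simp only [mulVec, dotProduct, hentry, sum_add_distrib, ← mul_sum,
    Fin.sum_ite_val_add_one_eq]
  rw [if_pos (by omega), if_pos (by omega), if_pos (by omega)]
  ring

-- `((j + 1) / 2, (j + 2) / 2)` are the coarse neighbours of the fine point `j + 1`;
-- they coincide when `j + 1` is even.
theorem linInterpC_mulVec_apply {N : ℕ} {U : ℕ → ℂ} (h₀ : U 0 = 0) (hN : U N = 0)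
    (j : Fin (2 * N - 1)) :
    (linInterpC N *ᵥ fun i => U ((i : ℕ) + 1)) j
      = (U (((j : ℕ) + 1) / 2) + U (((j : ℕ) + 2) / 2)) / 2 := by
  have hentry : ∀ i : Fin (N - 1), linInterpC N j i * U ((i : ℕ) + 1)
      = 1 / 2 * (if (i : ℕ) + 1 = ((j : ℕ) + 1) / 2 then U ((i : ℕ) + 1) else 0)
        + 1 / 2 * (if (i : ℕ) + 1 = ((j : ℕ) + 2) / 2 then U ((i : ℕ) + 1) else 0) := by
    intro i
    simp only [linInterpC, of_apply]
    split_ifs <;> first | omega | ring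
  have hj := j.isLt
  have hd : U (N - 1 + 1) = 0 := by rwa [Nat.sub_add_cancel (by omega)]
  simp only [mulVec, dotProduct, hentry, sum_add_distrib, ← mul_sum,
    Fin.sum_ite_val_add_one_eq_of_eq_zero h₀ hd (by omega : ((j : ℕ) + 1) / 2 ≤ N - 1 + 1),
    Fin.sum_ite_val_add_one_eq_of_eq_zero h₀ hd (by omega : ((j : ℕ) + 2) / 2 ≤ N - 1 + 1)]
  ring

theorem Real.cos_sq_half_sub_sin_sq_half (θ : ℝ) :
    Real.cos (θ / 2) ^ 2 - Real.sin (θ / 2) ^ 2 = Real.cos θ := by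
  rw [← Real.cos_two_mul', mul_div_cancel₀ θ two_ne_zero]

noncomputable def sinGrid (θ : ℝ) (k : ℕ) : ℂ := (Real.sin (k * θ) : ℂ)

theorem sinGrid_zero (θ : ℝ) : sinGrid θ 0 = 0 := by simp [sinGrid]

theorem sinGrid_pi_sub (θ : ℝ) (k : ℕ) : sinGrid (π - θ) k = -(-1) ^ k * sinGrid θ k := by
  rw [sinGrid, sinGrid, mul_sub, Real.sin_nat_mul_pi_sub]
  push_cast
  ring

theorem sinGrid_two_mul_pi_sub (θ : ℝ) (k : ℕ) :
    sinGrid (2 * (π - θ)) k = -sinGrid (2 * θ) k := by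
  simp only [sinGrid]
  rw [show (k : ℝ) * (2 * (π - θ)) = (2 * k : ℕ) * π - k * (2 * θ) by push_cast; ring,
    Real.sin_nat_mul_pi_sub, pow_mul]
  norm_num

theorem sinGrid_add_sinGrid_add_two (θ : ℝ) (k : ℕ) :
    sinGrid θ k + sinGrid θ (k + 2) = 2 * (Real.cos θ : ℂ) * sinGrid θ (k + 1) := by
  have h := Real.two_mul_sin_mul_cos ((k + 1 : ℕ) * θ) θ
  rw [show ((k + 1 : ℕ) : ℝ) * θ - θ = k * θ by push_cast; ring,
    show ((k + 1 : ℕ) : ℝ) * θ + θ = (k + 2 : ℕ) * θ by push_cast; ring,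
    mul_right_comm] at h
  simp only [sinGrid]
  exact_mod_cast h.symm

theorem sinGrid_second_diff (θ : ℝ) (k : ℕ) :
    2 * sinGrid θ (k + 1) - sinGrid θ k - sinGrid θ (k + 2)
      = 4 * (Real.sin (θ / 2) : ℂ) ^ 2 * sinGrid θ (k + 1) := by
  have hcos : (Real.cos θ : ℂ) = 1 - 2 * (Real.sin (θ / 2) : ℂ) ^ 2 := by
    rw [← Real.cos_sq_half_sub_sin_sq_half, Real.cos_sq']
    push_cast
    ring
  linear_combination -(sinGrid_add_sinGrid_add_two θ k) - 2 * sinGrid θ (k + 1) * hcos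

theorem sinGrid_full_weighting (θ : ℝ) (i : ℕ) :
    (sinGrid θ (2 * i + 1) + 2 * sinGrid θ (2 * i + 2) + sinGrid θ (2 * i + 3)) / 4
      = (Real.cos (θ / 2) : ℂ) ^ 2 * sinGrid (2 * θ) (i + 1) := by
  have hcos : (Real.cos θ : ℂ) = 2 * (Real.cos (θ / 2) : ℂ) ^ 2 - 1 := by
    rw [← Real.cos_sq_half_sub_sin_sq_half, Real.sin_sq]
    push_cast
    ring
  have hk : sinGrid (2 * θ) (i + 1) = sinGrid θ (2 * i + 2) := by
    simp only [sinGrid]; push_cast; ring_nf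
  rw [hk]
  linear_combination (sinGrid_add_sinGrid_add_two θ (2 * i + 1)) / 4
    + sinGrid θ (2 * i + 2) / 2 * hcos

theorem sinGrid_interpolation (θ : ℝ) (k : ℕ) :
    (sinGrid (2 * θ) (k / 2) + sinGrid (2 * θ) ((k + 1) / 2)) / 2
      = (Real.cos (θ / 2) : ℂ) ^ 2 * sinGrid θ k
        - (Real.sin (θ / 2) : ℂ) ^ 2 * sinGrid (π - θ) k := by
  have hdouble (c : ℕ) : sinGrid (2 * θ) c = sinGrid θ (2 * c) := by
    simp only [sinGrid]; push_cast; ring_nf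
  have hpyth : (Real.sin (θ / 2) : ℂ) ^ 2 + (Real.cos (θ / 2) : ℂ) ^ 2 = 1 := by
    exact_mod_cast Real.sin_sq_add_cos_sq (θ / 2)
  have hcos : (Real.cos (θ / 2) : ℂ) ^ 2 - (Real.sin (θ / 2) : ℂ) ^ 2 = Real.cos θ := by
    exact_mod_cast Real.cos_sq_half_sub_sin_sq_half θ
  rw [sinGrid_pi_sub]
  obtain ⟨c, rfl | rfl⟩ := Nat.even_or_odd' k
  · rw [show 2 * c / 2 = c by omega, show (2 * c + 1) / 2 = c by omega, hdouble,
      show ((-1 : ℂ)) ^ (2 * c) = 1 by rw [pow_mul]; norm_num]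
    linear_combination -(sinGrid θ (2 * c)) * hpyth
  · rw [show (2 * c + 1) / 2 = c by omega, show (2 * c + 1 + 1) / 2 = c + 1 by omega, hdouble,
      hdouble, show 2 * (c + 1) = 2 * c + 2 by ring,
      show ((-1 : ℂ)) ^ (2 * c + 1) = -1 by rw [pow_succ, pow_mul]; norm_num]
    linear_combination
      (sinGrid_add_sinGrid_add_two θ (2 * c)) / 2 - sinGrid θ (2 * c + 1) * hcos

noncomputable def sinVec (d : ℕ) (θ : ℝ) : Fin d → ℂ := fun j => sinGrid θ ((j : ℕ) + 1)

theorem dLapC_mulVec_sinVec {m : ℕ} (δ : ℝ) {θ : ℝ} (hθ : Real.sin (m * θ) = 0) :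
    dLapC m δ *ᵥ sinVec (m - 1) θ
      = (4 * (Real.sin (θ / 2) : ℂ) ^ 2 / (δ : ℂ) ^ 2) • sinVec (m - 1) θ := by
  funext i
  unfold sinVec
  rw [dLapC_mulVec_apply δ (sinGrid_zero θ) (by simp [sinGrid, hθ]), sinGrid_second_diff,
    Pi.smul_apply, smul_eq_mul]
  ring

theorem fullWeightingC_mulVec_sinVec (N : ℕ) (θ : ℝ) :
    fullWeightingC N *ᵥ sinVec (2 * N - 1) θ
      = (Real.cos (θ / 2) : ℂ) ^ 2 • sinVec (N - 1) (2 * θ) := by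
  funext i
  unfold sinVec
  rw [fullWeightingC_mulVec_apply, sinGrid_full_weighting]
  rfl

theorem linInterpC_mulVec_sinVec {N : ℕ} {θ : ℝ} (hθ : Real.sin (N * (2 * θ)) = 0) :
    linInterpC N *ᵥ sinVec (N - 1) (2 * θ)
      = (Real.cos (θ / 2) : ℂ) ^ 2 • sinVec (2 * N - 1) θ
        - (Real.sin (θ / 2) : ℂ) ^ 2 • sinVec (2 * N - 1) (π - θ) := by
  funext j
  unfold sinVec
  rw [linInterpC_mulVec_apply (sinGrid_zero _) (by simp [sinGrid, hθ]), sinGrid_interpolation]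
  rfl

noncomputable def coarseModeC (N l : ℕ) : Fin (N - 1) → ℂ :=
  fun i => (Real.sin (l * ((i : ℕ) + 1) * π / N) : ℂ)

section Modes

variable {N l : ℕ}

theorem fineModeC_eq_sinVec :
    fineModeC N l = sinVec (2 * N - 1) (l * π / (2 * N)) := by
  funext j
  simp only [fineModeC, sinVec, sinGrid]
  congr 2
  push_cast
  ring

theorem fineModeC_two_mul_sub (hl : l ≤ 2 * N) (hN : N ≠ 0) :
    fineModeC N (2 * N - l) = sinVec (2 * N - 1) (π - l * π / (2 * N)) := by
  funext j
  simp only [fineModeC, sinVec, sinGrid]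
  rw [Nat.cast_sub hl]
  push_cast
  field_simp

theorem coarseModeC_eq_sinVec :
    coarseModeC N l = sinVec (N - 1) (2 * (l * π / (2 * N))) := by
  funext i
  simp only [coarseModeC, sinVec, sinGrid]
  congr 2
  push_cast
  ring

theorem dLapC_mulVec_fineModeC_two_mul_sub (hl : l ≤ 2 * N) (hN : N ≠ 0) :
    dLapC (2 * N) (1 / (2 * N)) *ᵥ fineModeC N (2 * N - l)
      = (4 * ((2 * N : ℕ) : ℂ) ^ 2 * (Real.cos (l * π / (2 * (2 * N))) : ℂ) ^ 2)
        • fineModeC N (2 * N - l) := by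
  have hθ : Real.sin ((2 * N : ℕ) * (π - l * π / (2 * N))) = 0 := by
    rw [show ((2 * N : ℕ) : ℝ) * (π - l * π / (2 * N)) = (2 * N : ℕ) * π - l * π by
      push_cast; field_simp, Real.sin_nat_mul_pi_sub, Real.sin_nat_mul_pi]
    simp
  rw [fineModeC_two_mul_sub hl hN, dLapC_mulVec_sinVec _ hθ,
    show (π - l * π / (2 * N)) / 2 = π / 2 - l * π / (2 * (2 * N)) by ring,
    Real.sin_pi_div_two_sub]
  congr 1
  push_cast
  field_simp

theorem dLapC_mulVec_coarseModeC (hN : N ≠ 0) :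
    dLapC N (2 * (1 / (2 * N))) *ᵥ coarseModeC N l
      = (((2 * N : ℕ) : ℂ) ^ 2 * (Real.sin (l * π / (2 * N)) : ℂ) ^ 2)
        • coarseModeC N l := by
  have hθ : Real.sin (N * (2 * (l * π / (2 * N)))) = 0 := by
    rw [show (N : ℝ) * (2 * (l * π / (2 * N))) = l * π by field_simp, Real.sin_nat_mul_pi]
  rw [coarseModeC_eq_sinVec, dLapC_mulVec_sinVec _ hθ,
    mul_div_cancel_left₀ _ (two_ne_zero : (2 : ℝ) ≠ 0)]
  congr 1
  push_cast
  field_simp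
  ring

theorem fullWeightingC_mulVec_fineModeC_two_mul_sub (hl : l ≤ 2 * N) (hN : N ≠ 0) :
    fullWeightingC N *ᵥ fineModeC N (2 * N - l)
      = -(Real.sin (l * π / (2 * (2 * N))) : ℂ) ^ 2 • coarseModeC N l := by
  rw [fineModeC_two_mul_sub hl hN, fullWeightingC_mulVec_sinVec, coarseModeC_eq_sinVec,
    show (π - l * π / (2 * N)) / 2 = π / 2 - l * π / (2 * (2 * N)) by ring,
    Real.cos_pi_div_two_sub]
  funext i
  simp only [Pi.smul_apply, smul_eq_mul, sinVec, sinGrid_two_mul_pi_sub]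
  ring

theorem linInterpC_mulVec_coarseModeC (hl : l ≤ 2 * N) (hN : N ≠ 0) :
    linInterpC N *ᵥ coarseModeC N l
      = (Real.cos (l * π / (2 * (2 * N))) : ℂ) ^ 2 • fineModeC N l
        - (Real.sin (l * π / (2 * (2 * N))) : ℂ) ^ 2 • fineModeC N (2 * N - l) := by
  have hθ : Real.sin (N * (2 * (l * π / (2 * N)))) = 0 := by
    rw [show (N : ℝ) * (2 * (l * π / (2 * N))) = l * π by field_simp, Real.sin_nat_mul_pi]
  rw [coarseModeC_eq_sinVec, linInterpC_mulVec_sinVec hθ, fineModeC_eq_sinVec,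
    fineModeC_two_mul_sub hl hN, show l * π / (2 * N) / 2 = l * π / (2 * (2 * N)) by ring]

end Modes

theorem twoGrid_oscillatory_mode_general (N : ℕ) (h : ℝ) (hh : h = 1 / (2 * N))
    (z₁ z₂ : ℂ)
    (hinv : IsUnit (dLapC N (2 * h) - z₂ • (1 : Matrix (Fin (N - 1)) (Fin (N - 1)) ℂ)).det) :
    ∀ l : ℕ, 1 ≤ l → l ≤ N - 1 →
      (1 - linInterpC N * (dLapC N (2 * h) - z₂ • 1)⁻¹ * fullWeightingC N
            * (dLapC (2 * N) h - z₁ • 1)).mulVec (fineModeC N (2 * N - l))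
        = fineModeC N (2 * N - l)
          + ((Real.sin (l * Real.pi / (2 * (2 * N))) : ℂ) ^ 2
              * ((4 * ((2 * N : ℕ) : ℂ) ^ 2 * (Real.cos (l * Real.pi / (2 * (2 * N))) : ℂ) ^ 2 - z₁)
                / (((2 * N : ℕ) : ℂ) ^ 2 * (Real.sin (l * Real.pi / (2 * N)) : ℂ) ^ 2 - z₂)))
            • ((Real.cos (l * Real.pi / (2 * (2 * N))) : ℂ) ^ 2 • fineModeC N l
                - (Real.sin (l * Real.pi / (2 * (2 * N))) : ℂ) ^ 2 • fineModeC N (2 * N - l)) := by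
  intro l hl₁ hl₂
  subst hh
  have hl : l ≤ 2 * N := by omega
  have hN : N ≠ 0 := by omega
  rw [twoGrid_mulVec_eq hinv
    (sub_smul_one_mulVec_of_mulVec_eq_smul (dLapC_mulVec_fineModeC_two_mul_sub hl hN) z₁)
    (fullWeightingC_mulVec_fineModeC_two_mul_sub hl hN)
    (sub_smul_one_mulVec_of_mulVec_eq_smul (dLapC_mulVec_coarseModeC hN) z₂)
    (linInterpC_mulVec_coarseModeC hl hN), sub_eq_add_neg, ← neg_smul]
  congr 2
  ring

/-- action of the two-grid correction operator
`TG = I − P (Ã^{2h})⁻¹ R Ã^h` (with `Ã^h = L^h − z₁ I`, `Ã^{2h} = L^{2h} − z₂ I`,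
`Ã^{2h}` invertible) on an oscillatory fine-grid mode `w_{n−l}^h`, `1 ≤ l ≤ N−1`:
`TG w_{n−l}^h = w_{n−l}^h + s_l (λ_{n−l}^h / λ_l^{2h}) (c_l w_l^h − s_l w_{n−l}^h)`. -/
theorem twoGrid_oscillatory_mode (N : ℕ) (hN : 2 ≤ N) (h : ℝ) (hh : h = 1 / (2 * N))
    (z₁ z₂ : ℂ)
    (hinv : IsUnit (dLapC N (2 * h) - z₂ • (1 : Matrix (Fin (N - 1)) (Fin (N - 1)) ℂ)).det) :
    ∀ l : ℕ, 1 ≤ l → l ≤ N - 1 →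
      (1 - linInterpC N * (dLapC N (2 * h) - z₂ • 1)⁻¹ * fullWeightingC N
            * (dLapC (2 * N) h - z₁ • 1)).mulVec (fineModeC N (2 * N - l))
        = fineModeC N (2 * N - l)
          + ((Real.sin (l * Real.pi / (2 * (2 * N))) : ℂ) ^ 2
              * ((4 * ((2 * N : ℕ) : ℂ) ^ 2 * (Real.cos (l * Real.pi / (2 * (2 * N))) : ℂ) ^ 2 - z₁)
                / (((2 * N : ℕ) : ℂ) ^ 2 * (Real.sin (l * Real.pi / (2 * N)) : ℂ) ^ 2 - z₂)))
            • ((Real.cos (l * Real.pi / (2 * (2 * N))) : ℂ) ^ 2 • fineModeC N l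
                - (Real.sin (l * Real.pi / (2 * (2 * N))) : ℂ) ^ 2 • fineModeC N (2 * N - l)) :=
  twoGrid_oscillatory_mode_general N h hh z₁ z₂ hinv
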